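/- Let α ∈ (0, 1], let C > 0, and let f : [0,1] → ℝ satisfy |f(s) - f(t)| ≤ C|s - t|^α for all s, t ∈ [0,1], with graph Γ = {(x, f(x)) : x ∈ [0,1]} ⊂ ℝ². Then for Lebesgue-almost every y ∈ ℝ, the Hausdorff dimension of the horizontal slice {x ∈ [0,1] : f(x) = y} is at most 1 - α. -/

import Mathlib

/-!
Cut `[0,1]` into `n + 1` intervals of length `h = 1/(n+1)`. The image of each has measure at most
`C hᵅ`, so the sum of `hᵈ` over the pieces whose image contains `y` has integral in `y` at most
`(n + 1) C hᵅ⁺ᵈ`, which tends to `0` when `d > 1 - α`. These sums bound `μH[d]` of the slice over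
`y` from above in the limit, so by Fatou's lemma that measure vanishes for almost every `y`
(an instance of Eilenberg's inequality). Letting `d` decrease to `1 - α` bounds the dimension.
-/
open Set MeasureTheory Filter Topology
open scoped ENNReal NNReal

theorem HolderOnWith.of_dist_le {X Y : Type*} [PseudoMetricSpace X] [PseudoMetricSpace Y]
    {f : X → Y} {s : Set X} {C r : ℝ} (hr : 0 ≤ r)
    (h : ∀ x ∈ s, ∀ y ∈ s, dist (f x) (f y) ≤ C * dist x y ^ r) :
    HolderOnWith C.toNNReal r.toNNReal f s := by
  intro x hx y hy
  rw [edist_dist, edist_dist, Real.coe_toNNReal r hr, ENNReal.ofReal_rpow_of_nonneg dist_nonneg hr,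
    ← ENNReal.ofReal_coe_nnreal, ← ENNReal.ofReal_mul (by positivity)]
  exact ENNReal.ofReal_le_ofReal <| (h x hx y hy).trans <|
    mul_le_mul_of_nonneg_right (Real.le_coe_toNNReal C) (by positivity)

theorem HolderOnWith.volume_image_le {X : Type*} [PseudoEMetricSpace X] {C r : ℝ≥0}
    {f : X → ℝ} {s : Set X} (hf : HolderOnWith C r f s) :
    volume (f '' s) ≤ C * Metric.ediam s ^ (r : ℝ) :=
  (Real.volume_le_diam _).trans hf.ediam_image_le

theorem Icc_add_mul_subset_iUnion_Icc {a h : ℝ} (hh : 0 ≤ h) (n : ℕ) :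
    Icc a (a + (n + 1) * h) ⊆ ⋃ k : Fin (n + 1), Icc (a + k * h) (a + (k + 1) * h) := by
  intro x ⟨hax, hxb⟩
  rcases hh.eq_or_lt with rfl | hpos
  · exact mem_iUnion.2 ⟨0, by simpa using hax, by simpa using hxb⟩
  set k := min n ⌊(x - a) / h⌋₊
  refine mem_iUnion.2 ⟨⟨k, Nat.lt_succ_of_le (min_le_left _ _)⟩, ?_, ?_⟩
  · have : (k : ℝ) ≤ (x - a) / h :=
      (Nat.cast_le.2 (min_le_right _ _)).trans (Nat.floor_le (div_nonneg (by linarith) hpos.le))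
    have := (le_div_iff₀ hpos).1 this
    linarith
  · rcases le_total ⌊(x - a) / h⌋₊ n with hle | hle
    · have := Nat.lt_floor_add_one ((x - a) / h)
      rw [div_lt_iff₀ hpos] at this
      simp only [k, min_eq_right hle]
      linarith
    · simp only [k, min_eq_left hle]
      linarith

section FiberMeasure

variable {X Y : Type*} [EMetricSpace X] [MeasurableSpace X] [BorelSpace X] [MeasurableSpace Y]
  {ν : Measure Y} {g : X → Y} {E : Set X} {ι : ℕ → Type*} [∀ n, Fintype (ι n)]
  {A : ∀ n, ι n → Set X} {d : ℝ} {r : ℕ → ℝ≥0∞}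

theorem hausdorffMeasure_fiber_le_liminf_sum (hd : 0 < d) (hr : Tendsto r atTop (𝓝 0))
    (hdiam : ∀ n i, Metric.ediam (A n i) ≤ r n) (hcover : ∀ n, E ⊆ ⋃ i, A n i) (y : Y) :
    μH[d] {x ∈ E | g x = y} ≤ liminf (fun n => ∑ i,
      Metric.ediam (A n i) ^ d * (toMeasurable ν (g '' A n i)).indicator 1 y) atTop := by
  have hfiber_cover : ∀ n, {x ∈ E | g x = y} ⊆ ⋃ i, A n i ∩ g ⁻¹' {y} := fun n x hx => by
    obtain ⟨i, hi⟩ := mem_iUnion.1 (hcover n hx.1)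
    exact mem_iUnion.2 ⟨i, hi, hx.2⟩
  have hterm : ∀ n i, Metric.ediam (A n i ∩ g ⁻¹' {y}) ^ d ≤
      Metric.ediam (A n i) ^ d * (toMeasurable ν (g '' A n i)).indicator 1 y := fun n i => by
    by_cases hy : y ∈ g '' A n i
    · rw [indicator_of_mem (subset_toMeasurable ν _ hy), Pi.one_apply, mul_one]
      exact ENNReal.rpow_le_rpow (Metric.ediam_mono inter_subset_left) hd.le
    · have hempty : A n i ∩ g ⁻¹' {y} = ∅ :=
        eq_empty_of_forall_notMem fun x hx => hy ⟨x, hx.1, hx.2⟩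
      simp [hempty, hd]
  calc μH[d] {x ∈ E | g x = y}
      ≤ liminf (fun n => ∑ i, Metric.ediam (A n i ∩ g ⁻¹' {y}) ^ d) atTop :=
        Measure.hausdorffMeasure_le_liminf_sum d _ r hr _
          (Eventually.of_forall fun n i =>
            (Metric.ediam_mono inter_subset_left).trans (hdiam n i))
          (Eventually.of_forall hfiber_cover)
    _ ≤ _ := liminf_le_liminf (Eventually.of_forall fun n => Finset.sum_le_sum fun i _ => hterm n i)

theorem ae_hausdorffMeasure_fiber_eq_zero (hd : 0 < d) (hr : Tendsto r atTop (𝓝 0))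
    (hdiam : ∀ n i, Metric.ediam (A n i) ≤ r n) (hcover : ∀ n, E ⊆ ⋃ i, A n i)
    (hsum : Tendsto (fun n => ∑ i, Metric.ediam (A n i) ^ d * ν (g '' A n i)) atTop (𝓝 0)) :
    ∀ᵐ y ∂ν, μH[d] {x ∈ E | g x = y} = 0 := by
  -- The images need not be measurable; their measurable hulls have the same measure.
  set F : ℕ → Y → ℝ≥0∞ := fun n y =>
    ∑ i, Metric.ediam (A n i) ^ d * (toMeasurable ν (g '' A n i)).indicator 1 y
  have hF : ∀ n, Measurable (F n) := fun n => Finset.measurable_sum _ fun i _ =>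
    (measurable_one.indicator (measurableSet_toMeasurable ν _)).const_mul _
  have hint : ∀ n, ∫⁻ y, F n y ∂ν = ∑ i, Metric.ediam (A n i) ^ d * ν (g '' A n i) := fun n => by
    rw [lintegral_finsetSum _ fun i _ =>
      (measurable_one.indicator (measurableSet_toMeasurable ν _)).const_mul _]
    refine Finset.sum_congr rfl fun i _ => ?_
    rw [lintegral_const_mul _ (measurable_one.indicator (measurableSet_toMeasurable ν _)),
      lintegral_indicator_one (measurableSet_toMeasurable ν _), measure_toMeasurable]
  have hliminf : ∫⁻ y, liminf (fun n => F n y) atTop ∂ν = 0 := by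
    refine nonpos_iff_eq_zero.1 ((lintegral_liminf_le hF).trans ?_)
    simp_rw [hint, hsum.liminf_eq, le_refl]
  filter_upwards [(lintegral_eq_zero_iff (Measurable.liminf hF)).1 hliminf] with y hy
  exact nonpos_iff_eq_zero.1
    ((hausdorffMeasure_fiber_le_liminf_sum hd hr hdiam hcover y).trans_eq hy)

theorem ae_dimH_le_of_forall_lt_ae_hausdorffMeasure_eq_zero {S : Y → Set X} {D : ℝ≥0}
    (h : ∀ d : ℝ≥0, D < d → ∀ᵐ y ∂ν, μH[d] (S y) = 0) : ∀ᵐ y ∂ν, dimH (S y) ≤ D := by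
  have hstep : ∀ m : ℕ, ∀ᵐ y ∂ν, dimH (S y) ≤ ↑(D + 1 / (m + 1)) := fun m =>
    (h _ (lt_add_of_pos_right _ Nat.one_div_pos_of_nat)).mono fun y hy =>
      dimH_le_of_hausdorffMeasure_ne_top (by rw [hy]; exact ENNReal.zero_ne_top)
  filter_upwards [ae_all_iff.2 hstep] with y hy
  refine ENNReal.le_of_forall_pos_le_add fun ε hε _ => ?_
  obtain ⟨m, hm⟩ := exists_nat_one_div_lt hε
  calc dimH (S y) ≤ ↑(D + 1 / (m + 1)) := hy m
    _ ≤ D + ε := by rw [ENNReal.coe_add]; gcongr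

end FiberMeasure

def uniformSubinterval (a b : ℝ) (n : ℕ) (k : Fin (n + 1)) : Set ℝ :=
  Icc a b ∩ Icc (a + k * ((b - a) / (n + 1))) (a + (k + 1) * ((b - a) / (n + 1)))

theorem ediam_uniformSubinterval_le (a b : ℝ) (n : ℕ) (k : Fin (n + 1)) :
    Metric.ediam (uniformSubinterval a b n k) ≤ ENNReal.ofReal ((b - a) / (n + 1)) :=
  (Metric.ediam_mono inter_subset_right).trans_eq (by rw [Real.ediam_Icc]; ring_nf)

theorem Icc_subset_iUnion_uniformSubinterval (a b : ℝ) (n : ℕ) :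
    Icc a b ⊆ ⋃ k, uniformSubinterval a b n k := by
  intro x hx
  have hab : 0 ≤ b - a := by linarith [hx.1, hx.2]
  have hb : a + (n + 1) * ((b - a) / (n + 1)) = b := by field_simp; ring
  have hmem : x ∈ Icc a (a + (n + 1) * ((b - a) / (n + 1))) := by rwa [hb]
  obtain ⟨k, hk⟩ := mem_iUnion.1 (Icc_add_mul_subset_iUnion_Icc (by positivity) n hmem)
  exact mem_iUnion.2 ⟨k, hx, hk⟩

theorem HolderOnWith.sum_ediam_rpow_mul_volume_image_uniformSubinterval_le {f : ℝ → ℝ}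
    {C r : ℝ≥0} {a b d : ℝ} (hf : HolderOnWith C r f (Icc a b)) (hab : a ≤ b) (hd : 0 < d)
    (n : ℕ) :
    ∑ k, Metric.ediam (uniformSubinterval a b n k) ^ d * volume (f '' uniformSubinterval a b n k)
      ≤ ENNReal.ofReal (C * (b - a) * ((b - a) / (n + 1)) ^ (r + d - 1 : ℝ)) := by
  set h := (b - a) / (n + 1) with h_def
  have hh : 0 ≤ h := div_nonneg (sub_nonneg.2 hab) (by positivity)
  have hterm : ∀ k, Metric.ediam (uniformSubinterval a b n k) ^ d *
      volume (f '' uniformSubinterval a b n k) ≤ ENNReal.ofReal (C * h ^ (r + d : ℝ)) := by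
    intro k
    have hdiam : Metric.ediam (uniformSubinterval a b n k) ≤ ENNReal.ofReal h :=
      ediam_uniformSubinterval_le a b n k
    calc Metric.ediam (uniformSubinterval a b n k) ^ d * volume (f '' uniformSubinterval a b n k)
        ≤ ENNReal.ofReal h ^ d * (C * ENNReal.ofReal h ^ (r : ℝ)) := by
          gcongr
          exact (hf.mono inter_subset_left).volume_image_le.trans (by gcongr; exact hdiam)
      _ = ENNReal.ofReal (C * h ^ (r + d : ℝ)) := by
          rw [ENNReal.ofReal_rpow_of_nonneg hh hd.le, ENNReal.ofReal_rpow_of_nonneg hh r.coe_nonneg,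
            ← ENNReal.ofReal_coe_nnreal, ← ENNReal.ofReal_mul C.coe_nonneg,
            ← ENNReal.ofReal_mul (by positivity), Real.rpow_add' hh (by positivity)]
          ring_nf
  calc _ ≤ ∑ _k : Fin (n + 1), ENNReal.ofReal (C * h ^ (r + d : ℝ)) :=
        Finset.sum_le_sum fun k _ => hterm k
    _ = ENNReal.ofReal ((n + 1) * h * (C * h ^ (r + d - 1 : ℝ))) := by
        rw [Finset.sum_const, Finset.card_univ, Fintype.card_fin, nsmul_eq_mul,
          ← ENNReal.ofReal_natCast, ← ENNReal.ofReal_mul (by positivity),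
          show (r + d : ℝ) = 1 + (r + d - 1) by ring,
          Real.rpow_add' hh (by rw [add_sub_cancel]; positivity),
          Real.rpow_one]
        push_cast
        ring_nf
    _ = ENNReal.ofReal (C * (b - a) * h ^ (r + d - 1 : ℝ)) := by
        rw [h_def]
        field_simp

theorem HolderOnWith.ae_hausdorffMeasure_slice_Icc_eq_zero {f : ℝ → ℝ} {C r : ℝ≥0} {a b d : ℝ}
    (hf : HolderOnWith C r f (Icc a b)) (hd : 0 < d) (hrd : 1 < r + d) :
    ∀ᵐ y, μH[d] {x ∈ Icc a b | f x = y} = 0 := by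
  rcases lt_or_ge b a with hba | hab
  · simp [Icc_eq_empty_of_lt hba]
  have hmesh : Tendsto (fun n : ℕ => (b - a) / (n + 1)) atTop (𝓝 0) := by
    simpa [div_eq_mul_inv] using tendsto_one_div_add_atTop_nhds_zero_nat.const_mul (b - a)
  have hbound : Tendsto (fun n : ℕ => ENNReal.ofReal (C * (b - a) * ((b - a) / (n + 1)) ^
      (r + d - 1 : ℝ))) atTop (𝓝 0) := by
    have := ENNReal.tendsto_ofReal
      ((hmesh.rpow_const (Or.inr (by linarith : (0 : ℝ) ≤ r + d - 1))).const_mul (C * (b - a)))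
    rwa [Real.zero_rpow (by linarith), mul_zero, ENNReal.ofReal_zero] at this
  exact ae_hausdorffMeasure_fiber_eq_zero hd (by simpa using ENNReal.tendsto_ofReal hmesh)
    (ediam_uniformSubinterval_le a b) (Icc_subset_iUnion_uniformSubinterval a b)
    (tendsto_of_tendsto_of_tendsto_of_le_of_le tendsto_const_nhds hbound (fun _ => zero_le)
      (hf.sum_ediam_rpow_mul_volume_image_uniformSubinterval_le hab hd))

theorem holder_graph_slice_dimH_general
    (α : ℝ) (hα₁ : 0 < α)
    (C : ℝ)
    (f : ℝ → ℝ)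
    (hf : ∀ s ∈ Icc (0 : ℝ) 1, ∀ t ∈ Icc (0 : ℝ) 1, |f s - f t| ≤ C * |s - t| ^ α) :
    ∀ᵐ y : ℝ ∂MeasureTheory.volume,
      dimH {x : ℝ | x ∈ Icc (0 : ℝ) 1 ∧ f x = y} ≤ ENNReal.ofReal (1 - α) := by
  have hholder : HolderOnWith C.toNNReal α.toNNReal f (Icc 0 1) :=
    HolderOnWith.of_dist_le hα₁.le hf
  refine ae_dimH_le_of_forall_lt_ae_hausdorffMeasure_eq_zero fun d hd =>
    hholder.ae_hausdorffMeasure_slice_Icc_eq_zero (NNReal.coe_pos.2 (pos_of_gt hd)) ?_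
  rw [Real.coe_toNNReal α hα₁.le]
  have : 1 - α < d := (Real.le_coe_toNNReal (1 - α)).trans_lt hd
  linarith

/-- For a Hölder-α function `f` on `[0,1]`, almost every horizontal slice of its
graph, i.e. the set `{x ∈ [0,1] : f x = y}`, has Hausdorff dimension at most `1 - α`. -/
theorem holder_graph_slice_dimH
    (α : ℝ) (hα₁ : 0 < α) (hα₂ : α ≤ 1)
    (C : ℝ) (hC : 0 < C)
    (f : ℝ → ℝ)
    (hf : ∀ s ∈ Icc (0 : ℝ) 1, ∀ t ∈ Icc (0 : ℝ) 1, |f s - f t| ≤ C * |s - t| ^ α) :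
    ∀ᵐ y : ℝ ∂MeasureTheory.volume,
      dimH {x : ℝ | x ∈ Icc (0 : ℝ) 1 ∧ f x = y} ≤ ENNReal.ofReal (1 - α) :=
  holder_graph_slice_dimH_general α hα₁ C f hf
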